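/- Let [M, U_M] : X → Y be a morphism in ECCor and let (π, Φ) be the associated C-covariant representation of X on K(M ⊗_B O_Y). Then (π, Φ) admits a gauge action: for every z in the circle group 𝕋, the map β_z(T) = (1_M ⊗ γ_z) T (1_M ⊗ γ_z̄), where γ is the gauge action of O_Y, defines a homomorphism of C*(π, Φ) with β_z(π(a)) = π(a) and β_z(Φ(x)) = z·Φ(x) for all a ∈ A, x ∈ X. (Here 1_M ⊗ γ_z is the bounded, in general non-adjointable, linear operator on M ⊗_B O_Y extending m ⊗ S ↦ m ⊗ γ_z(S), and (1_M ⊗ γ_z)k(1_M ⊗ γ_z̄) is adjointable for every k ∈ K(M ⊗_B O_Y).) -/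

import Mathlib

/-!  Common framework: C*-correspondences, tensor products, representations,
Cuntz–Pimsner algebras, and the category `ECCor`, axiomatised as structures. -/

noncomputable section

universe u

/-- The closed linear span of a subset of a topological `ℂ`-module. -/
def clspan {V : Type*} [AddCommMonoid V] [Module ℂ V] [TopologicalSpace V] (s : Set V) : Set V :=
  closure ((Submodule.span ℂ s : Submodule ℂ V) : Set V)

/-- A (nondegenerate) C*-correspondence from `A` to `B`: a right Hilbert `B`-module `X`
equipped with a left action of `A` by adjointable operators, such that `A · X` is dense. -/
structure Corr (A : Type u) (B : Type u)
    [NonUnitalCStarAlgebra A] [NonUnitalCStarAlgebra B] : Type (u + 1) where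
  /-- the underlying module -/
  X : Type u
  [nacg : NormedAddCommGroup X]
  [nsp : NormedSpace ℂ X]
  [cs : CompleteSpace X]
  /-- the `B`-valued inner product `⟨·,·⟩_B` -/
  ip : X → X → B
  /-- the right action of `B` -/
  sm : X → B → X
  /-- the left action of `A` -/
  la : A → X → X
  sm_add : ∀ (x y : X) (b : B), sm (x + y) b = sm x b + sm y b
  sm_add' : ∀ (x : X) (b c : B), sm x (b + c) = sm x b + sm x c
  sm_mul : ∀ (x : X) (b c : B), sm (sm x b) c = sm x (b * c)
  sm_smul : ∀ (z : ℂ) (x : X) (b : B), sm (z • x) b = z • sm x b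
  sm_smul' : ∀ (z : ℂ) (x : X) (b : B), sm x (z • b) = z • sm x b
  sm_bound : ∀ (x : X) (b : B), ‖sm x b‖ ≤ ‖x‖ * ‖b‖
  ip_add : ∀ (x y z : X), ip x (y + z) = ip x y + ip x z
  ip_smul : ∀ (z : ℂ) (x y : X), ip x (z • y) = z • ip x y
  ip_star : ∀ (x y : X), star (ip x y) = ip y x
  ip_sm : ∀ (x y : X) (b : B), ip x (sm y b) = ip x y * b
  ip_pos : ∀ x : X, ∃ b : B, ip x x = star b * b
  ip_norm : ∀ x : X, ‖x‖ ^ 2 = ‖ip x x‖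
  ip_bound : ∀ x y : X, ‖ip x y‖ ≤ ‖x‖ * ‖y‖
  la_add : ∀ (a : A) (x y : X), la a (x + y) = la a x + la a y
  la_smul : ∀ (a : A) (z : ℂ) (x : X), la a (z • x) = z • la a x
  la_add' : ∀ (a b : A) (x : X), la (a + b) x = la a x + la b x
  la_mul : ∀ (a b : A) (x : X), la (a * b) x = la a (la b x)
  la_smul' : ∀ (z : ℂ) (a : A) (x : X), la (z • a) x = z • la a x
  la_adj : ∀ (a : A) (x y : X), ip (la a x) y = ip x (la (star a) y)
  la_bound : ∀ (a : A) (x : X), ‖la a x‖ ≤ ‖a‖ * ‖x‖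
  la_sm : ∀ (a : A) (x : X) (b : B), la a (sm x b) = sm (la a x) b
  /-- nondegeneracy: `A · X` is dense in `X` -/
  nondeg : clspan {y : X | ∃ (a : A) (x : X), y = la a x} = Set.univ

attribute [instance] Corr.nacg Corr.nsp Corr.cs

namespace Corr

variable {A B : Type u} [NonUnitalCStarAlgebra A] [NonUnitalCStarAlgebra B]

/-- The left action, as a continuous linear operator. -/
def lmul (E : Corr A B) (a : A) : E.X →L[ℂ] E.X :=
  LinearMap.mkContinuous
    { toFun := E.la a
      map_add' := E.la_add a
      map_smul' := fun z x => E.la_smul a z x }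
    ‖a‖ (E.la_bound a)

/-- The rank-one operator `θ_{x,y} : z ↦ x · ⟨y, z⟩_B`. -/
def rankOne (E : Corr A B) (x y : E.X) : E.X →L[ℂ] E.X :=
  LinearMap.mkContinuous
    { toFun := fun z => E.sm x (E.ip y z)
      map_add' := fun u v => by
        show E.sm x (E.ip y (u + v)) = E.sm x (E.ip y u) + E.sm x (E.ip y v)
        rw [E.ip_add, E.sm_add']
      map_smul' := fun c u => by
        show E.sm x (E.ip y (c • u)) = c • E.sm x (E.ip y u)
        rw [E.ip_smul, E.sm_smul'] }
    (‖x‖ * ‖y‖)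
    (fun z => by
      calc ‖E.sm x (E.ip y z)‖ ≤ ‖x‖ * ‖E.ip y z‖ := E.sm_bound _ _
        _ ≤ ‖x‖ * (‖y‖ * ‖z‖) :=
            mul_le_mul_of_nonneg_left (E.ip_bound y z) (norm_nonneg x)
        _ = ‖x‖ * ‖y‖ * ‖z‖ := (mul_assoc _ _ _).symm)

/-- The compact operators `K(X)`: the closed linear span of the rank-one operators. -/
def compacts (E : Corr A B) : Set (E.X →L[ℂ] E.X) :=
  clspan (Set.range fun p : E.X × E.X => E.rankOne p.1 p.2)

/-- A correspondence is injective if its left action is injective. -/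
def Injective (E : Corr A B) : Prop := Function.Injective E.lmul

/-- A correspondence is regular if its left action is injective with values in the compacts. -/
def Regular (E : Corr A B) : Prop :=
  Function.Injective E.lmul ∧ ∀ a : A, E.lmul a ∈ E.compacts

/-- Katsura's ideal `J_X = φ_X⁻¹(K(X)) ∩ (ker φ_X)^⊥` of a correspondence over `A`. -/
def katsuraIdeal {A : Type u} [NonUnitalCStarAlgebra A] (E : Corr A A) : Set A :=
  {a : A | E.lmul a ∈ E.compacts ∧ ∀ b : A, E.lmul b = 0 → a * b = 0}

/-- The closed submodule `M · J` of `M` determined by a subset `J ⊆ B`. -/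
def smSet (M : Corr A B) (J : Set B) : Set M.X :=
  clspan {ξ : M.X | ∃ (m : M.X) (b : B), b ∈ J ∧ ξ = M.sm m b}

/-- A pair of operators on a correspondence which are adjoint to each other. -/
def IsAdjointPair (W : Corr A B) (T S : W.X →L[ℂ] W.X) : Prop :=
  ∀ ξ η : W.X, W.ip (T ξ) η = W.ip ξ (S η)

end Corr

/-- The condition `J_X · M ⊆ M · J_Y` on an `A–B` correspondence `M`,
relative to correspondences `X` over `A` and `Y` over `B`. -/
def KatsuraCompat {A B : Type u} [NonUnitalCStarAlgebra A] [NonUnitalCStarAlgebra B]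
    (E : Corr A A) (M : Corr A B) (F : Corr B B) : Prop :=
  ∀ a ∈ E.katsuraIdeal, ∀ m : M.X, M.la a m ∈ M.smSet F.katsuraIdeal

/-- An isomorphism of `A–B` correspondences. -/
structure CorrIso {A B : Type u} [NonUnitalCStarAlgebra A] [NonUnitalCStarAlgebra B]
    (E F : Corr A B) where
  toFun : E.X → F.X
  invFun : F.X → E.X
  left_inv : Function.LeftInverse invFun toFun
  right_inv : Function.RightInverse invFun toFun
  map_add : ∀ x y : E.X, toFun (x + y) = toFun x + toFun y
  map_smul : ∀ (c : ℂ) (x : E.X), toFun (c • x) = c • toFun x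
  map_la : ∀ (a : A) (x : E.X), toFun (E.la a x) = F.la a (toFun x)
  map_ip : ∀ x y : E.X, F.ip (toFun x) (toFun y) = E.ip x y

/-- Witness that the correspondence `T` *is* the balanced tensor product `E ⊗_B F`,
via the bilinear map `mk2 : (x, y) ↦ x ⊗ y`. -/
structure TensorData {A B C : Type u} [NonUnitalCStarAlgebra A] [NonUnitalCStarAlgebra B]
    [NonUnitalCStarAlgebra C] (E : Corr A B) (F : Corr B C) (T : Corr A C) where
  mk2 : E.X → F.X → T.X
  add_l : ∀ (x x' : E.X) (y : F.X), mk2 (x + x') y = mk2 x y + mk2 x' y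
  add_r : ∀ (x : E.X) (y y' : F.X), mk2 x (y + y') = mk2 x y + mk2 x y'
  smul_l : ∀ (c : ℂ) (x : E.X) (y : F.X), mk2 (c • x) y = c • mk2 x y
  smul_r : ∀ (c : ℂ) (x : E.X) (y : F.X), mk2 x (c • y) = c • mk2 x y
  balanced : ∀ (x : E.X) (b : B) (y : F.X), mk2 (E.sm x b) y = mk2 x (F.la b y)
  ip_mk : ∀ (x x' : E.X) (y y' : F.X),
    T.ip (mk2 x y) (mk2 x' y') = F.ip y (F.la (E.ip x x') y')
  la_mk : ∀ (a : A) (x : E.X) (y : F.X), T.la a (mk2 x y) = mk2 (E.la a x) y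
  sm_mk : ∀ (x : E.X) (y : F.X) (c : C), T.sm (mk2 x y) c = mk2 x (F.sm y c)
  dense : clspan (Set.range fun p : E.X × F.X => mk2 p.1 p.2) = Set.univ

/-- Witness that `C` is the `A–D` correspondence obtained from the C*-algebra `D`
by letting `A` act on the left through the map `ψ : A → D` (e.g. the identity
correspondence when `D = A` and `ψ = id`). -/
structure PullCorr {A D : Type u} [NonUnitalCStarAlgebra A] [NonUnitalCStarAlgebra D]
    (ψ : A → D) (C : Corr A D) where
  u : D → C.X
  bij : Function.Bijective u
  add : ∀ d d' : D, u (d + d') = u d + u d'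
  smul : ∀ (c : ℂ) (d : D), u (c • d) = c • u d
  ip : ∀ d d' : D, C.ip (u d) (u d') = star d * d'
  la : ∀ (a : A) (d : D), C.la a (u d) = u (ψ a * d)
  sm : ∀ d d' : D, C.sm (u d) d' = u (d * d')

/-- Witness that `W'` is the `C–D` correspondence obtained from the `B–D` correspondence `W`
by transferring the left action along a homomorphism `σ : C → L(W)`. -/
structure ReCorr {B C D : Type u} [NonUnitalCStarAlgebra B] [NonUnitalCStarAlgebra C]
    [NonUnitalCStarAlgebra D] (W : Corr B D) (σ : C → (W.X →L[ℂ] W.X)) (W' : Corr C D) where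
  w : W.X → W'.X
  bij : Function.Bijective w
  add : ∀ ξ η : W.X, w (ξ + η) = w ξ + w η
  smul : ∀ (c : ℂ) (ξ : W.X), w (c • ξ) = c • w ξ
  ip_eq : ∀ ξ η : W.X, W'.ip (w ξ) (w η) = W.ip ξ η
  sm_eq : ∀ (ξ : W.X) (d : D), w (W.sm ξ d) = W'.sm (w ξ) d
  la_eq : ∀ (c : C) (ξ : W.X), W'.la c (w ξ) = w (σ c ξ)

/-- The structure of an `A–B` imprimitivity bimodule on an `A–B` correspondence `M`:
a compatible left `A`-valued inner product, full on both sides. -/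
structure ImpData {A B : Type u} [NonUnitalCStarAlgebra A] [NonUnitalCStarAlgebra B]
    (M : Corr A B) where
  lip : M.X → M.X → A
  lip_add : ∀ x y z : M.X, lip (x + y) z = lip x z + lip y z
  lip_smul : ∀ (c : ℂ) (x y : M.X), lip (c • x) y = c • lip x y
  lip_star : ∀ x y : M.X, star (lip x y) = lip y x
  lip_la : ∀ (a : A) (x y : M.X), lip (M.la a x) y = a * lip x y
  lip_pos : ∀ x : M.X, ∃ a : A, lip x x = star a * a
  compat : ∀ x y z : M.X, M.la (lip x y) z = M.sm x (M.ip y z)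
  full_left : clspan {a : A | ∃ x y : M.X, a = lip x y} = Set.univ
  full_right : clspan {b : B | ∃ x y : M.X, b = M.ip x y} = Set.univ

/-- Witness that the `B–A` correspondence `N` is the dual (conjugate) imprimitivity bimodule
of the `A–B` imprimitivity bimodule `M`. -/
structure DualData {A B : Type u} [NonUnitalCStarAlgebra A] [NonUnitalCStarAlgebra B]
    (M : Corr A B) (imp : ImpData M) (N : Corr B A) where
  d : M.X → N.X
  bij : Function.Bijective d
  add : ∀ x y : M.X, d (x + y) = d x + d y
  conj_smul : ∀ (c : ℂ) (x : M.X), d (c • x) = (starRingEnd ℂ c) • d x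
  la_eq : ∀ (b : B) (x : M.X), N.la b (d x) = d (M.sm x (star b))
  sm_eq : ∀ (x : M.X) (a : A), N.sm (d x) a = d (M.la (star a) x)
  ip_eq : ∀ x y : M.X, N.ip (d x) (d y) = imp.lip x y

/-- Witness that `X` (a correspondence over `A`) is a nondegenerate subcorrespondence of
`Y` (a correspondence over `B`), via `(φ̇, ϕ)`. -/
structure SubCorr {A B : Type u} [NonUnitalCStarAlgebra A] [NonUnitalCStarAlgebra B]
    (E : Corr A A) (F : Corr B B) where
  φd : E.X → F.X
  φd_inj : Function.Injective φd
  φd_add : ∀ x y : E.X, φd (x + y) = φd x + φd y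
  φd_smul : ∀ (c : ℂ) (x : E.X), φd (c • x) = c • φd x
  ϕ : A → B
  ϕ_inj : Function.Injective ϕ
  ϕ_add : ∀ a b : A, ϕ (a + b) = ϕ a + ϕ b
  ϕ_mul : ∀ a b : A, ϕ (a * b) = ϕ a * ϕ b
  ϕ_star : ∀ a : A, ϕ (star a) = star (ϕ a)
  ϕ_smul : ∀ (c : ℂ) (a : A), ϕ (c • a) = c • ϕ a
  ϕ_nondeg : clspan {b : B | ∃ (a : A) (c : B), b = ϕ a * c} = Set.univ
  la_eq : ∀ (a : A) (x : E.X), φd (E.la a x) = F.la (ϕ a) (φd x)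
  ip_eq : ∀ x y : E.X, F.ip (φd x) (φd y) = ϕ (E.ip x y)
  dense : clspan {y : F.X | ∃ (x : E.X) (b : B), y = F.sm (φd x) b} = Set.univ

/-- A representation `(π, t)` of a correspondence `X` over `A` on a C*-algebra `D`. -/
structure CorrRep {A : Type u} [NonUnitalCStarAlgebra A] (E : Corr A A)
    (D : Type u) [NonUnitalCStarAlgebra D] where
  π : A → D
  t : E.X → D
  π_add : ∀ a b : A, π (a + b) = π a + π b
  π_mul : ∀ a b : A, π (a * b) = π a * π b
  π_star : ∀ a : A, π (star a) = star (π a)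
  π_smul : ∀ (c : ℂ) (a : A), π (c • a) = c • π a
  t_add : ∀ x y : E.X, t (x + y) = t x + t y
  t_smul : ∀ (c : ℂ) (x : E.X), t (c • x) = c • t x
  mul_t : ∀ (a : A) (x : E.X), π a * t x = t (E.la a x)
  t_mul : ∀ x y : E.X, star (t x) * t y = π (E.ip x y)

/-- Covariance of a representation on the Katsura ideal:
`π(a) = Ψ_t(φ_X(a))` for `a ∈ J_X`, expressed by simultaneous approximation of
`φ_X(a)` by finite-rank operators and of `π(a)` by the corresponding finite sums. -/
def CorrRep.Covariant {A : Type u} [NonUnitalCStarAlgebra A] {E : Corr A A}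
    {D : Type u} [NonUnitalCStarAlgebra D] (R : CorrRep E D) : Prop :=
  ∀ a ∈ E.katsuraIdeal, ∀ ε > (0 : ℝ), ∃ (k : ℕ) (x y : Fin k → E.X),
    ‖E.lmul a - ∑ i, E.rankOne (x i) (y i)‖ < ε ∧
    ‖R.π a - ∑ i, R.t (x i) * star (R.t (y i))‖ < ε

/-- The products `t(x₁)⋯t(xₙ)`, i.e. `t^n` applied to elementary tensors. -/
def CorrRep.tProd {A : Type u} [NonUnitalCStarAlgebra A] {E : Corr A A}
    {D : Type u} [NonUnitalCStarAlgebra D] (R : CorrRep E D) :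
    (n : ℕ) → (Fin (n + 1) → E.X) → D
  | 0, x => R.t (x 0)
  | (k + 1), x => R.t (x 0) * R.tProd k (fun i => x i.succ)

/-- A Cuntz–Pimsner algebra for `X`: a C*-algebra `O` with a universal injective covariant
representation of `X`, generated by the image of that representation. -/
structure CuntzPimsner {A : Type u} [NonUnitalCStarAlgebra A] (E : Corr A A) :
    Type (u + 1) where
  O : Type u
  [str : NonUnitalCStarAlgebra O]
  rep : CorrRep E O
  covariant : rep.Covariant
  injective : Function.Injective rep.π
  generates :
    Dense ((NonUnitalStarAlgebra.adjoin ℂ (Set.range rep.π ∪ Set.range rep.t) :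
      NonUnitalStarSubalgebra ℂ O) : Set O)
  universal : ∀ (D : Type u) [NonUnitalCStarAlgebra D] (R : CorrRep E D), R.Covariant →
    ∃ ρ : O → D, Continuous ρ ∧
      (∀ p q : O, ρ (p + q) = ρ p + ρ q) ∧
      (∀ (c : ℂ) (p : O), ρ (c • p) = c • ρ p) ∧
      (∀ p q : O, ρ (p * q) = ρ p * ρ q) ∧
      (∀ p : O, ρ (star p) = star (ρ p)) ∧
      (∀ a : A, ρ (rep.π a) = R.π a) ∧
      (∀ x : E.X, ρ (rep.t x) = R.t x)

attribute [instance] CuntzPimsner.str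

/-- The gauge action of the circle on a Cuntz–Pimsner algebra. -/
structure GaugeAction {A : Type u} [NonUnitalCStarAlgebra A] {E : Corr A A}
    (CP : CuntzPimsner E) where
  g : ℂ → CP.O → CP.O
  g_add : ∀ z : ℂ, ‖z‖ = 1 → ∀ S T : CP.O, g z (S + T) = g z S + g z T
  g_smul : ∀ z : ℂ, ‖z‖ = 1 → ∀ (c : ℂ) (S : CP.O), g z (c • S) = c • g z S
  g_mul : ∀ z : ℂ, ‖z‖ = 1 → ∀ S T : CP.O, g z (S * T) = g z S * g z T
  g_star : ∀ z : ℂ, ‖z‖ = 1 → ∀ S : CP.O, g z (star S) = star (g z S)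
  g_comp : ∀ z w : ℂ, ‖z‖ = 1 → ‖w‖ = 1 → ∀ S : CP.O, g (z * w) S = g z (g w S)
  g_one : ∀ S : CP.O, g 1 S = S
  g_cont : ∀ S : CP.O, Continuous fun z : {z : ℂ // ‖z‖ = 1} => g z.1 S
  g_π : ∀ z : ℂ, ‖z‖ = 1 → ∀ a : A, g z (CP.rep.π a) = CP.rep.π a
  g_t : ∀ z : ℂ, ‖z‖ = 1 → ∀ x : E.X, g z (CP.rep.t x) = z • CP.rep.t x

/-- The data of a morphism `X → Y` in the category `ECCor`: a regular `A–B` correspondence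
`M` with `J_X · M ⊆ M · J_Y`, together with a correspondence isomorphism
`U : X ⊗_A M → M ⊗_B Y`. -/
structure EMor {A B : Type u} [NonUnitalCStarAlgebra A] [NonUnitalCStarAlgebra B]
    (E : Corr A A) (F : Corr B B) : Type (u + 1) where
  M : Corr A B
  regular : M.Regular
  kat : KatsuraCompat E M F
  TXM : Corr A B
  tdXM : TensorData E M TXM
  TMY : Corr A B
  tdMY : TensorData M F TMY
  U : CorrIso TXM TMY

/-- Two morphism data `(M, U_M)` and `(M', U_{M'})` are isomorphic:
there is an isomorphism `ξ : M → M'` with `U_{M'} ∘ (1_X ⊗ ξ) = (ξ ⊗ 1_Y) ∘ U_M`. -/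
def EMorEquiv {A B : Type u} [NonUnitalCStarAlgebra A] [NonUnitalCStarAlgebra B]
    {E : Corr A A} {F : Corr B B} (m m' : EMor E F) : Prop :=
  ∃ ξ : CorrIso m.M m'.M,
  ∃ Ξ : m.TMY.X → m'.TMY.X,
    (∀ ζ η, Ξ (ζ + η) = Ξ ζ + Ξ η) ∧
    (∀ (c : ℂ) ζ, Ξ (c • ζ) = c • Ξ ζ) ∧
    Continuous Ξ ∧
    (∀ (mm : m.M.X) (y : F.X), Ξ (m.tdMY.mk2 mm y) = m'.tdMY.mk2 (ξ.toFun mm) y) ∧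
    (∀ (x : E.X) (mm : m.M.X),
      m'.U.toFun (m'.tdXM.mk2 x (ξ.toFun mm)) = Ξ (m.U.toFun (m.tdXM.mk2 x mm)))

/-- `p` is a composite of `m : X → Y` and `n : Y → Z` in `ECCor`:
`p.M = M ⊗_B N` and `U_P = (1_M ⊗ U_N)(U_M ⊗ 1_N)` modulo the canonical identifications. -/
def EIsComposite {A B C : Type u} [NonUnitalCStarAlgebra A] [NonUnitalCStarAlgebra B]
    [NonUnitalCStarAlgebra C] {E : Corr A A} {F : Corr B B} {G : Corr C C}
    (m : EMor E F) (n : EMor F G) (p : EMor E G) : Prop :=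
  ∃ td : TensorData m.M n.M p.M,
  ∃ Ξ : m.M.X → n.TMY.X → p.TMY.X,       -- m ⊗ (n ⊗ z) ↦ (m ⊗ n) ⊗ z
  ∃ Θ : m.TMY.X → n.M.X → p.TMY.X,       -- (m ⊗ y) ⊗ n ↦ m ⊗ U_N(y ⊗ n)
    (∀ mm : m.M.X, (∀ ζ η, Ξ mm (ζ + η) = Ξ mm ζ + Ξ mm η) ∧
      (∀ (c : ℂ) ζ, Ξ mm (c • ζ) = c • Ξ mm ζ) ∧ Continuous (Ξ mm)) ∧
    (∀ (mm : m.M.X) (nn : n.M.X) (z : G.X),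
      Ξ mm (n.tdMY.mk2 nn z) = p.tdMY.mk2 (td.mk2 mm nn) z) ∧
    (∀ nn : n.M.X, (∀ ζ η, Θ (ζ + η) nn = Θ ζ nn + Θ η nn) ∧
      (∀ (c : ℂ) ζ, Θ (c • ζ) nn = c • Θ ζ nn) ∧ Continuous (fun ζ => Θ ζ nn)) ∧
    (∀ (mm : m.M.X) (y : F.X) (nn : n.M.X),
      Θ (m.tdMY.mk2 mm y) nn = Ξ mm (n.U.toFun (n.tdXM.mk2 y nn))) ∧
    (∀ (x : E.X) (mm : m.M.X) (nn : n.M.X),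
      p.U.toFun (p.tdXM.mk2 x (td.mk2 mm nn)) = Θ (m.U.toFun (m.tdXM.mk2 x mm)) nn)

/-- `e` is an identity morphism on `X` in `ECCor`: `e.M` is the identity correspondence `A`
and `U_A = i_l⁻¹ ∘ i_r : X ⊗_A A → A ⊗_A X`, i.e. `i_l (U_A (x ⊗ a)) = x · a`. -/
def EIsIdentity {A : Type u} [NonUnitalCStarAlgebra A] {E : Corr A A}
    (e : EMor E E) : Prop :=
  ∃ idd : PullCorr (fun a : A => a) e.M,
  ∃ il : e.TMY.X → E.X,
    (∀ ζ η, il (ζ + η) = il ζ + il η) ∧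
    (∀ (c : ℂ) ζ, il (c • ζ) = c • il ζ) ∧
    Continuous il ∧
    Function.Injective il ∧
    (∀ (a : A) (x : E.X), il (e.tdMY.mk2 (idd.u a) x) = E.la a x) ∧
    (∀ (x : E.X) (a : A), il (e.U.toFun (e.tdXM.mk2 x (idd.u a))) = E.sm x a)

/-- A morphism in `ECCor` is an isomorphism: it has a two-sided inverse up to
isomorphism of morphism data. -/
def EIsEIso {A B : Type u} [NonUnitalCStarAlgebra A] [NonUnitalCStarAlgebra B]
    {E : Corr A A} {F : Corr B B} (m : EMor E F) : Prop :=
  ∃ (n : EMor F E) (p : EMor E E) (q : EMor F F) (e : EMor E E) (f : EMor F F),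
    EIsComposite m n p ∧ EIsIdentity e ∧ EMorEquiv p e ∧
    EIsComposite n m q ∧ EIsIdentity f ∧ EMorEquiv q f

/-- The standing data for the C-covariant representation of `X` on `K(M ⊗_B O_Y)`
associated with a morphism `[M, U_M] : X → Y` in `ECCor`:  `O_Y` regarded as a
`B–O_Y` correspondence, the tensor product `W = M ⊗_B O_Y`, the canonical map
`Λ : (M ⊗_B Y) × O_Y → W`, `(m ⊗ y, S) ↦ m ⊗ t_Y(y)S`, and the operators
`Φ(x) = (1_M ⊗ V_Y)(T(x) ⊗ 1_{O_Y})`. -/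
structure CCovSetup {A B : Type u} [NonUnitalCStarAlgebra A] [NonUnitalCStarAlgebra B]
    {E : Corr A A} {F : Corr B B} (m : EMor E F) (CPY : CuntzPimsner F) :
    Type (u + 1) where
  OYc : Corr B CPY.O
  pcY : PullCorr CPY.rep.π OYc
  W : Corr A CPY.O
  tdW : TensorData m.M OYc W
  Λ : m.TMY.X → CPY.O → W.X
  Λ_add : ∀ (S : CPY.O) (ζ η : m.TMY.X), Λ (ζ + η) S = Λ ζ S + Λ η S
  Λ_smul : ∀ (S : CPY.O) (c : ℂ) (ζ : m.TMY.X), Λ (c • ζ) S = c • Λ ζ S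
  Λ_cont : ∀ S : CPY.O, Continuous fun ζ => Λ ζ S
  Λ_mk : ∀ (mm : m.M.X) (y : F.X) (S : CPY.O),
    Λ (m.tdMY.mk2 mm y) S = tdW.mk2 mm (pcY.u (CPY.rep.t y * S))
  Φ : E.X → (W.X →L[ℂ] W.X)
  Φ_mk : ∀ (x : E.X) (mm : m.M.X) (S : CPY.O),
    Φ x (tdW.mk2 mm (pcY.u S)) = Λ (m.U.toFun (m.tdXM.mk2 x mm)) S

/-- The homomorphism `σ : O_X → K(M ⊗_B O_Y) ⊆ L(M ⊗_B O_Y)` induced by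
the C-covariant representation. -/
structure SigmaData {A B : Type u} [NonUnitalCStarAlgebra A] [NonUnitalCStarAlgebra B]
    {E : Corr A A} {F : Corr B B} {m : EMor E F} {CPY : CuntzPimsner F}
    (st : CCovSetup m CPY) (CPX : CuntzPimsner E) where
  σ : CPX.O → (st.W.X →L[ℂ] st.W.X)
  σ_add : ∀ S T : CPX.O, σ (S + T) = σ S + σ T
  σ_smul : ∀ (c : ℂ) (S : CPX.O), σ (c • S) = c • σ S
  σ_mul : ∀ S T : CPX.O, σ (S * T) = (σ S).comp (σ T)
  σ_star : ∀ S : CPX.O, st.W.IsAdjointPair (σ S) (σ (star S))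
  σ_cont : Continuous σ
  σ_t : ∀ x : E.X, σ (CPX.rep.t x) = st.Φ x
  σ_π : ∀ a : A, σ (CPX.rep.π a) = st.W.lmul a

/-- A bundled C*-correspondence over a C*-algebra. -/
structure BCorr : Type (u + 1) where
  alg : Type u
  [str : NonUnitalCStarAlgebra alg]
  cor : Corr alg alg

attribute [instance] BCorr.str

/-- Elementary strong shift equivalence through *regular* correspondences `R`, `S`:
`X ≅ R ⊗_B S` and `Y ≅ S ⊗_A R`. -/
def ElemSSERegular (E F : BCorr) : Prop :=
  ∃ (R : Corr E.alg F.alg) (S : Corr F.alg E.alg)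
    (T₁ : Corr E.alg E.alg) (_ : TensorData R S T₁)
    (T₂ : Corr F.alg F.alg) (_ : TensorData S R T₂),
    R.Regular ∧ S.Regular ∧ Nonempty (CorrIso T₁ E.cor) ∧ Nonempty (CorrIso T₂ F.cor)

/-- Strong shift equivalence (with all intermediate data regular). -/
def StrongSSERegular (E F : BCorr) : Prop :=
  ∃ (n : ℕ) (Z : Fin (n + 1) → BCorr),
    Z 0 = E ∧ Z (Fin.last n) = F ∧
    (∀ i, (Z i).cor.Regular) ∧
    ∀ i : Fin n, ElemSSERegular (Z i.castSucc) (Z i.succ)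

/-- The tower of tensor powers `X^{⊗ k}` of a correspondence `X` over `A`
(with `X^{⊗ 0} = A`), together with the "append on the right" maps
`X^{⊗ k} × X → X^{⊗ (k+1)}`. -/
structure PowerTower {A : Type u} [NonUnitalCStarAlgebra A] (E : Corr A A) :
    Type (u + 1) where
  P : ℕ → Corr A A
  zero : PullCorr (fun a : A => a) (P 0)
  step : ∀ k : ℕ, TensorData E (P k) (P (k + 1))
  app : ∀ k : ℕ, (P k).X → E.X → (P (k + 1)).X
  app_add : ∀ (k : ℕ) (y : E.X) (w w' : (P k).X), app k (w + w') y = app k w y + app k w' y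
  app_smul : ∀ (k : ℕ) (y : E.X) (c : ℂ) (w : (P k).X), app k (c • w) y = c • app k w y
  app_cont : ∀ (k : ℕ) (y : E.X), Continuous fun w => app k w y
  app_base : ∀ (a : A) (y : E.X) (b : A),
    (P 1).sm (app 0 (zero.u a) y) b = (step 0).mk2 (E.la a y) (zero.u b)
  app_step : ∀ (k : ℕ) (x : E.X) (w : (P k).X) (y : E.X),
    app (k + 1) ((step k).mk2 x w) y = (step (k + 1)).mk2 x (app k w y)

end

noncomputable section

universe u

/-! The gauge automorphism `γ_z` of `O_Y` fixes `π_Y(B)`, so `G_z = 1_M ⊗ γ_z` is well defined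
on `M ⊗_B O_Y`, has inverse `G_z̄`, and twists inner products by `γ_z`:
`⟨G_z ξ, G_z η⟩ = γ_z ⟨ξ, η⟩`. Hence conjugation by `G_z` carries an adjoint pair `(k, k*)` to the
adjoint pair `(G_z k G_z̄, G_z k* G_z̄)`, and compact operators are adjointable. On elementary
tensors `G_z` commutes with the left action of `A`, while
`γ_z (t_Y(y) S) = z · t_Y(y) γ_z(S)` produces the factor `z` in front of `Φ(x)`. -/

open scoped CStarAlgebra

namespace Corr

variable {A B : Type u} [NonUnitalCStarAlgebra A] [NonUnitalCStarAlgebra B] (W : Corr A B)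

def ipRight (ξ : W.X) : W.X →L[ℂ] B :=
  LinearMap.mkContinuous
    { toFun := W.ip ξ
      map_add' := W.ip_add ξ
      map_smul' := fun c η => W.ip_smul c ξ η }
    ‖ξ‖ (W.ip_bound ξ)

@[simp]
lemma ipRight_apply (ξ η : W.X) : W.ipRight ξ η = W.ip ξ η := rfl

lemma ip_add_left (x y z : W.X) : W.ip (x + y) z = W.ip x z + W.ip y z := by
  rw [← W.ip_star z, W.ip_add, star_add, W.ip_star, W.ip_star]

lemma ip_smul_left (c : ℂ) (x z : W.X) : W.ip (c • x) z = star c • W.ip x z := by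
  rw [← W.ip_star z, W.ip_smul, star_smul, W.ip_star]

lemma ip_sub_right (x y z : W.X) : W.ip x (y - z) = W.ip x y - W.ip x z :=
  map_sub (W.ipRight x) y z

lemma ip_sub_left (x y z : W.X) : W.ip (x - y) z = W.ip x z - W.ip y z := by
  rw [← W.ip_star z, ip_sub_right, star_sub, W.ip_star, W.ip_star]

lemma continuous_ip_left (η : W.X) : Continuous fun ξ => W.ip ξ η := by
  simp_rw [← W.ip_star η, ← ipRight_apply]
  exact continuous_star.comp (W.ipRight η).continuous

variable {W}

lemma IsAdjointPair.symm {T S : W.X →L[ℂ] W.X} (h : W.IsAdjointPair T S) :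
    W.IsAdjointPair S T := fun ξ η => by
  rw [← W.ip_star η, ← h, W.ip_star]

lemma IsAdjointPair.sub {T₁ T₂ S₁ S₂ : W.X →L[ℂ] W.X} (h₁ : W.IsAdjointPair T₁ S₁)
    (h₂ : W.IsAdjointPair T₂ S₂) : W.IsAdjointPair (T₁ - T₂) (S₁ - S₂) := fun ξ η => by
  rw [sub_apply, sub_apply, W.ip_sub_left, h₁, h₂, W.ip_sub_right]

lemma IsAdjointPair.norm_le {T S : W.X →L[ℂ] W.X} (h : W.IsAdjointPair T S) : ‖S‖ ≤ ‖T‖ := by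
  refine S.opNorm_le_bound (norm_nonneg T) fun η => ?_
  have hsq : ‖S η‖ ^ 2 ≤ ‖T‖ * ‖η‖ * ‖S η‖ := by
    rw [W.ip_norm, h.symm η]
    calc ‖W.ip η (T (S η))‖ ≤ ‖η‖ * ‖T (S η)‖ := W.ip_bound _ _
      _ ≤ ‖η‖ * (‖T‖ * ‖S η‖) := by gcongr; exact T.le_opNorm _
      _ = ‖T‖ * ‖η‖ * ‖S η‖ := by ring
  nlinarith [norm_nonneg (S η), mul_nonneg (norm_nonneg T) (norm_nonneg η)]

lemma IsAdjointPair.conj {G G' k k' : W.X →L[ℂ] W.X} {α : B → B}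
    (hG : ∀ ζ η, W.ip (G ζ) (G η) = α (W.ip ζ η)) (hGG' : ∀ ζ, G (G' ζ) = ζ)
    (hk : W.IsAdjointPair k k') : W.IsAdjointPair (G ∘L k ∘L G') (G ∘L k' ∘L G') :=
  fun ξ η => calc
    W.ip (G (k (G' ξ))) η = W.ip (G (k (G' ξ))) (G (G' η)) := by rw [hGG']
    _ = α (W.ip (G' ξ) (k' (G' η))) := by rw [hG, hk]
    _ = W.ip ξ (G (k' (G' η))) := by rw [← hG, hGG']

variable (W)

def adjointable : Submodule ℂ (W.X →L[ℂ] W.X) where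
  carrier := {T | ∃ S, W.IsAdjointPair T S}
  zero_mem' := ⟨0, fun ξ η => by
    rw [zero_apply, zero_apply, ← ipRight_apply W ξ, map_zero]
    simpa using W.ip_smul_left 0 0 η⟩
  add_mem' := fun ⟨S₁, h₁⟩ ⟨S₂, h₂⟩ => ⟨S₁ + S₂, fun ξ η => by
    simp only [add_apply, W.ip_add_left, W.ip_add, h₁ ξ η, h₂ ξ η]⟩
  smul_mem' := fun c _ ⟨S, h⟩ => ⟨star c • S, fun ξ η => by
    simp only [smul_apply, W.ip_smul_left, W.ip_smul, h ξ η]⟩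

lemma rankOne_mem_adjointable (x y : W.X) : W.rankOne x y ∈ W.adjointable :=
  ⟨W.rankOne y x, fun ξ η => by
    show W.ip (W.sm x (W.ip y ξ)) η = W.ip ξ (W.sm y (W.ip x η))
    rw [← W.ip_star η, W.ip_sm, star_mul, W.ip_star, W.ip_star, W.ip_sm]⟩

/-- Adjoints of a convergent sequence of adjointable operators form a Cauchy sequence, because
taking adjoints does not increase the norm. -/
lemma isClosed_adjointable : IsClosed (W.adjointable : Set (W.X →L[ℂ] W.X)) := by
  refine IsSeqClosed.isClosed fun T k hT hlim => ?_
  choose S hS using hT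
  have hS_cauchy : CauchySeq S := by
    refine Metric.cauchySeq_iff.2 fun ε hε => ?_
    obtain ⟨N, hN⟩ := Metric.cauchySeq_iff.1 hlim.cauchySeq ε hε
    refine ⟨N, fun n hn p hp => ?_⟩
    rw [dist_eq_norm]
    exact ((hS n).sub (hS p)).norm_le.trans_lt (by simpa [dist_eq_norm] using hN n hn p hp)
  obtain ⟨k', hk'⟩ := cauchySeq_tendsto_of_complete hS_cauchy
  refine ⟨k', fun ξ η => tendsto_nhds_unique (f := fun n => W.ip (T n ξ) η) (l := .atTop) ?_ ?_⟩
  · exact ((W.continuous_ip_left η).tendsto _).comp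
      (((ContinuousLinearMap.apply ℂ W.X ξ).continuous.tendsto k).comp hlim)
  · simp_rw [hS _ ξ η, ← ipRight_apply]
    exact ((W.ipRight ξ).continuous.tendsto _).comp
      (((ContinuousLinearMap.apply ℂ W.X η).continuous.tendsto k').comp hk')

lemma compacts_subset_adjointable : W.compacts ⊆ W.adjointable :=
  closure_minimal
    (Submodule.span_le.2 (by rintro _ ⟨⟨x, y⟩, rfl⟩; exact W.rankOne_mem_adjointable x y))
    W.isClosed_adjointable

variable {D : Type u} [NonUnitalCStarAlgebra D]

/-- `hα` lets `ip_star` carry density from the linear slot to the conjugate-linear one. -/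
lemma ip_map_map_of_dense (W : Corr A D) {s : Set W.X}
    (hs : Dense (Submodule.span ℂ s : Set W.X))
    (T : W.X →L[ℂ] W.X) (α : D →L[ℂ] D) (hα : ∀ d, α (star d) = star (α d))
    (h : ∀ ζ ∈ s, ∀ η ∈ s, W.ip (T ζ) (T η) = α (W.ip ζ η)) (ζ η : W.X) :
    W.ip (T ζ) (T η) = α (W.ip ζ η) := by
  have ext_right : ∀ ζ, (∀ η ∈ s, W.ip (T ζ) (T η) = α (W.ip ζ η)) →
      ∀ η, W.ip (T ζ) (T η) = α (W.ip ζ η) := fun ζ hζ η =>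
    DFunLike.congr_fun (ContinuousLinearMap.ext_on hs
      (f := (W.ipRight (T ζ)).comp T) (g := α.comp (W.ipRight ζ)) hζ) η
  refine ext_right ζ (fun η hη => ?_) η
  rw [← W.ip_star, ext_right η (h η hη) ζ, ← hα, W.ip_star]

end Corr

namespace TensorData

variable {A B D : Type u} [NonUnitalCStarAlgebra A] [NonUnitalCStarAlgebra B]
  [NonUnitalCStarAlgebra D] {M : Corr A B} {C : Corr B D} {W : Corr A D}
  (td : TensorData M C W)

lemma ext_of_mk2 {V : Type*} [NormedAddCommGroup V] [NormedSpace ℂ V] {f g : W.X →L[ℂ] V}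
    (h : ∀ x y, f (td.mk2 x y) = g (td.mk2 x y)) : f = g :=
  ContinuousLinearMap.ext_on (dense_iff_closure_eq.2 td.dense)
    (by rintro _ ⟨⟨x, y⟩, rfl⟩; exact h x y)

variable {ψ : B → D} (pc : PullCorr ψ C)

lemma dense_span_mk2_pull :
    Dense (Submodule.span ℂ (Set.range fun p : M.X × D => td.mk2 p.1 (pc.u p.2)) : Set W.X) := by
  have hrange : (Set.range fun p : M.X × D => td.mk2 p.1 (pc.u p.2)) =
      Set.range fun p : M.X × C.X => td.mk2 p.1 p.2 :=
    (Function.surjective_id.prodMap pc.bij.surjective).range_comp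
      (fun p : M.X × C.X => td.mk2 p.1 p.2)
  rw [hrange]
  exact dense_iff_closure_eq.2 td.dense

lemma ext_of_mk2_pull {V : Type*} [NormedAddCommGroup V] [NormedSpace ℂ V] {f g : W.X →L[ℂ] V}
    (h : ∀ x S, f (td.mk2 x (pc.u S)) = g (td.mk2 x (pc.u S))) : f = g :=
  ContinuousLinearMap.ext_on (td.dense_span_mk2_pull pc)
    (by rintro _ ⟨⟨x, S⟩, rfl⟩; exact h x S)

/-- `T` is the operator `1_M ⊗ α` on `M ⊗_B D`. -/
def IsIdTensor (T : W.X → W.X) (α : D → D) : Prop :=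
  ∀ x S, T (td.mk2 x (pc.u S)) = td.mk2 x (pc.u (α S))

variable {td pc}

lemma IsIdTensor.comp_eq_id {T₁ T₂ : W.X →L[ℂ] W.X} {α₁ α₂ : D → D}
    (h₁ : td.IsIdTensor pc T₁ α₁) (h₂ : td.IsIdTensor pc T₂ α₂) (hα : ∀ S, α₁ (α₂ S) = S)
    (ζ : W.X) : T₁ (T₂ ζ) = ζ :=
  DFunLike.congr_fun (td.ext_of_mk2_pull pc (f := T₁ ∘L T₂) (g := .id ℂ W.X) fun x S => by
    show T₁ (T₂ _) = td.mk2 x (pc.u S)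
    rw [h₂, h₁, hα]) ζ

lemma IsIdTensor.map_lmul {T : W.X →L[ℂ] W.X} {α : D → D} (hT : td.IsIdTensor pc T α)
    (a : A) (ζ : W.X) : T (W.lmul a ζ) = W.lmul a (T ζ) :=
  DFunLike.congr_fun (td.ext_of_mk2_pull pc (f := T ∘L W.lmul a) (g := W.lmul a ∘L T) fun x S => by
    show T (W.la a _) = W.la a (T _)
    rw [td.la_mk, hT, hT, td.la_mk]) ζ

lemma IsIdTensor.ip_map_map {T : W.X →L[ℂ] W.X} {α : D →⋆ₙₐ[ℂ] D}
    (hT : td.IsIdTensor pc T α) (hαψ : ∀ b, α (ψ b) = ψ b) (ζ η : W.X) :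
    W.ip (T ζ) (T η) = α (W.ip ζ η) := by
  refine W.ip_map_map_of_dense (td.dense_span_mk2_pull pc) T
    ⟨(α : D →ₗ[ℂ] D), map_continuous α⟩ (map_star α) ?_ ζ η
  rintro _ ⟨⟨x, S⟩, rfl⟩ _ ⟨⟨x', S'⟩, rfl⟩
  show W.ip (T _) (T _) = α _
  rw [hT, hT, td.ip_mk, td.ip_mk, pc.la, pc.la, pc.ip, pc.ip, map_mul, map_mul, map_star, hαψ]

end TensorData

namespace GaugeAction

variable {A : Type u} [NonUnitalCStarAlgebra A] {E : Corr A A} {CP : CuntzPimsner E}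
  (ga : GaugeAction CP) {z : ℂ}

def toNonUnitalStarAlgHom (hz : ‖z‖ = 1) : CP.O →⋆ₙₐ[ℂ] CP.O where
  toFun := ga.g z
  map_smul' := ga.g_smul z hz
  map_zero' := by simpa using ga.g_smul z hz 0 0
  map_add' := ga.g_add z hz
  map_mul' := ga.g_mul z hz
  map_star' := ga.g_star z hz

lemma g_g_star (hz : ‖z‖ = 1) (S : CP.O) : ga.g z (ga.g (star z) S) = S := by
  have hz' : ‖star z‖ = 1 := by rwa [norm_star]
  rw [← ga.g_comp z (star z) hz hz', Complex.star_def, Complex.mul_conj', hz, Complex.ofReal_one,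
    one_pow, ga.g_one]

end GaugeAction

namespace CCovSetup

variable {A B : Type u} [NonUnitalCStarAlgebra A] [NonUnitalCStarAlgebra B]
  {E : Corr A A} {F : Corr B B} {m : EMor E F} {CPY : CuntzPimsner F}
  (st : CCovSetup m CPY)

def ΛL (S : CPY.O) : m.TMY.X →L[ℂ] st.W.X :=
  ⟨⟨⟨fun ζ => st.Λ ζ S, st.Λ_add S⟩, st.Λ_smul S⟩, st.Λ_cont S⟩

variable {st} {ga : GaugeAction CPY} {z : ℂ} {T : st.W.X →L[ℂ] st.W.X}

lemma map_Λ (hz : ‖z‖ = 1) (hT : st.tdW.IsIdTensor st.pcY T (ga.g z)) (ζ : m.TMY.X)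
    (S : CPY.O) : T (st.Λ ζ S) = z • st.Λ ζ (ga.g z S) :=
  DFunLike.congr_fun (m.tdMY.ext_of_mk2 (f := T ∘L st.ΛL S) (g := z • st.ΛL (ga.g z S))
    fun x y => by
      show T (st.Λ _ S) = z • st.Λ _ (ga.g z S)
      rw [st.Λ_mk, st.Λ_mk, hT, ga.g_mul z hz, ga.g_t z hz, smul_mul_assoc, st.pcY.smul,
        st.tdW.smul_r]) ζ

lemma conj_Φ (hz : ‖z‖ = 1) (hT : st.tdW.IsIdTensor st.pcY T (ga.g z))
    {T' : st.W.X →L[ℂ] st.W.X} (hT' : st.tdW.IsIdTensor st.pcY T' (ga.g (star z)))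
    (x : E.X) (ζ : st.W.X) : T (st.Φ x (T' ζ)) = z • st.Φ x ζ :=
  DFunLike.congr_fun (st.tdW.ext_of_mk2_pull st.pcY (f := T ∘L st.Φ x ∘L T') (g := z • st.Φ x)
    fun mm S => by
      show T (st.Φ x (T' _)) = z • st.Φ x _
      rw [hT', st.Φ_mk, st.Φ_mk, map_Λ hz hT, ga.g_g_star hz]) ζ

end CCovSetup

/-- Let `[M, U_M] : X → Y` be a morphism in `ECCor` and let `(π, Φ)` be the
associated C-covariant representation on `K(M ⊗_B O_Y)`.  Then `(π, Φ)` admits a gauge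
action: with `γ` the gauge action of `O_Y` and `1_M ⊗ γ_z` the bounded (in general
non-adjointable) operator `G z` on `M ⊗_B O_Y`, conjugation `β_z = (1_M ⊗ γ_z)·(1_M ⊗ γ_z̄)`
carries compacts to adjointable operators, fixes `π(a)`, and scales `Φ(x)` by `z`. -/
theorem c_cov_rep_admits_gauge_action
    (A B : Type u) [NonUnitalCStarAlgebra A] [NonUnitalCStarAlgebra B]
    (E : Corr A A) (F : Corr B B)
    (m : EMor E F) (CPY : CuntzPimsner F) (st : CCovSetup m CPY)
    -- the gauge action γ of O_Y
    (ga : GaugeAction CPY)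
    -- the bounded linear operator 1_M ⊗ γ_z on M ⊗_B O_Y
    (G : ℂ → st.W.X → st.W.X)
    (G_add : ∀ z : ℂ, ‖z‖ = 1 → ∀ ζ η, G z (ζ + η) = G z ζ + G z η)
    (G_smul : ∀ z : ℂ, ‖z‖ = 1 → ∀ (c : ℂ) ζ, G z (c • ζ) = c • G z ζ)
    (G_cont : ∀ z : ℂ, ‖z‖ = 1 → Continuous (G z))
    (G_mk : ∀ z : ℂ, ‖z‖ = 1 → ∀ (mm : m.M.X) (S : CPY.O),
      G z (st.tdW.mk2 mm (st.pcY.u S)) = st.tdW.mk2 mm (st.pcY.u (ga.g z S))) :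
    ∀ z : ℂ, ‖z‖ = 1 →
      -- (1_M ⊗ γ_z)(1_M ⊗ γ_z̄) = 1, so that β_z is a homomorphism of C*(π, Φ)
      (∀ ζ : st.W.X, G z (G (star z) ζ) = ζ) ∧
      -- β_z(k) = (1_M ⊗ γ_z) k (1_M ⊗ γ_z̄) is adjointable for every compact k
      (∀ k : st.W.X →L[ℂ] st.W.X, k ∈ st.W.compacts →
        ∃ k' k'' : st.W.X →L[ℂ] st.W.X,
          (∀ ζ, k' ζ = G z (k (G (star z) ζ))) ∧ st.W.IsAdjointPair k' k'') ∧
      -- β_z(π(a)) = π(a)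
      (∀ (a : A) (ζ : st.W.X), G z (st.W.lmul a (G (star z) ζ)) = st.W.lmul a ζ) ∧
      -- β_z(Φ(x)) = z • Φ(x)
      (∀ (x : E.X) (ζ : st.W.X), G z (st.Φ x (G (star z) ζ)) = z • st.Φ x ζ) := by
  intro z hz
  have hz' : ‖star z‖ = 1 := by rwa [norm_star]
  let Gz : st.W.X →L[ℂ] st.W.X := ⟨⟨⟨G z, G_add z hz⟩, G_smul z hz⟩, G_cont z hz⟩
  let Gz' : st.W.X →L[ℂ] st.W.X := ⟨⟨⟨G (star z), G_add _ hz'⟩, G_smul _ hz'⟩, G_cont _ hz'⟩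
  have hGz : st.tdW.IsIdTensor st.pcY Gz (ga.g z) := G_mk z hz
  have hGz' : st.tdW.IsIdTensor st.pcY Gz' (ga.g (star z)) := G_mk (star z) hz'
  have inv : ∀ ζ, Gz (Gz' ζ) = ζ := hGz.comp_eq_id hGz' (ga.g_g_star hz)
  have hip : ∀ ζ η, st.W.ip (Gz ζ) (Gz η) = ga.toNonUnitalStarAlgHom hz (st.W.ip ζ η) :=
    TensorData.IsIdTensor.ip_map_map (α := ga.toNonUnitalStarAlgHom hz) hGz (ga.g_π z hz)
  refine ⟨inv, fun k hk => ?_, fun a ζ => ?_, st.conj_Φ hz hGz hGz'⟩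
  · obtain ⟨k', hk'⟩ := st.W.compacts_subset_adjointable hk
    exact ⟨Gz ∘L k ∘L Gz', Gz ∘L k' ∘L Gz', fun ζ => rfl, hk'.conj hip inv⟩
  · exact (hGz.map_lmul a (Gz' ζ)).trans (congrArg _ (inv ζ))

end
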